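/- A matrix c = (c_{jk}) ∈ ℂ^{ℤ_d×ℤ_d} satisfies Tc = vv* for some unit vector v ∈ ℂ^d with |⟨S^jΩ^k v, v⟩|² = 1/(d+1) for all (j,k) ≠ (0,0) (i.e., v is a Weyl–Heisenberg SIC fiducial with fiducial projector Tc) if and only if (i) c_{jk} = ω^{-jk}·conj(c_{-j,-k}) for all j,k, (ii) c_{00} = 1, (iii) |c_{jk}|² = 1/(d+1) for all (j,k) ≠ (0,0), and (iv) trace((Tc)⁴) = 1. -/

import Mathlib

open Matrix Complex

/-- `ω = exp(2πi/d)`, a primitive `d`-th root of unity. -/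
noncomputable def omegaRoot (d : ℕ) : ℂ := Complex.exp (2 * Real.pi * Complex.I / d)

/-- The cyclic shift matrix `S`, `S_{jk} = δ_{j,k+1}`. -/
def Smat (d : ℕ) [NeZero d] : Matrix (ZMod d) (ZMod d) ℂ :=
  Matrix.of fun j k => if j = k + 1 then 1 else 0

/-- The modulation matrix `Ω`, `Ω_{jk} = ω^j δ_{jk}`. -/
noncomputable def Omat (d : ℕ) [NeZero d] : Matrix (ZMod d) (ZMod d) ℂ :=
  Matrix.of fun j k => if j = k then omegaRoot d ^ j.val else 0

/-- The reconstruction operator `T`, `Tc = (1/d) Σ_{j,k} c_{jk} (S^j Ω^k)^*`. -/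
noncomputable def Trec (d : ℕ) [NeZero d] (c : Matrix (ZMod d) (ZMod d) ℂ) :
    Matrix (ZMod d) (ZMod d) ℂ :=
  (1 / (d : ℂ)) • ∑ j : ZMod d, ∑ k : ZMod d, c j k • (Smat d ^ j.val * Omat d ^ k.val)ᴴ

/-- The overlap `⟨S^j Ω^k v, v⟩ = Σ_r (S^j Ω^k v)_r conj(v_r)`. -/
noncomputable def overlap (d : ℕ) [NeZero d] (v : ZMod d → ℂ) (j k : ZMod d) : ℂ :=
  ∑ r : ZMod d, ((Smat d ^ j.val * Omat d ^ k.val) *ᵥ v) r * (starRingEnd ℂ) (v r)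
/-! The displacement operators `D_{jk} = S^j Ω^k` are orthogonal for the trace form,
`tr (D_{ab} D_{jk}^*) = d δ_{aj} δ_{bk}`, so `c_{jk} = tr (D_{jk} Tc)`. When `Tc = vv*` this is the
overlap `⟨D_{jk} v, v⟩`, which gives (ii) and (iii), while (i) is `Tc = (Tc)^*` read through
`D_{-j,-k}^* = ω^{jk} D_{jk}`, and (iv) holds because `vv*` is a projection.
Conversely (i) makes `Tc` Hermitian and (ii), (iii) give `tr Tc = tr (Tc)² = 1`. Together with
`tr (Tc)⁴ = 1` the eigenvalues satisfy `Σ λ = Σ λ² = Σ λ⁴ = 1`, which forces one eigenvalue `1` and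
all others `0`, so `Tc` is a rank-one projection `vv*`. -/

section WeylHeisenberg

variable {d : ℕ} [NeZero d]

lemma omegaRoot_zpow (n : ℤ) : omegaRoot d ^ n = ZMod.stdAddChar (n : ZMod d) := by
  rw [ZMod.stdAddChar_coe, omegaRoot, ← Complex.exp_int_mul]
  ring_nf

lemma omegaRoot_pow_val (j : ZMod d) : omegaRoot d ^ j.val = ZMod.stdAddChar j := by
  rw [← zpow_natCast, omegaRoot_zpow, Int.cast_natCast, ZMod.natCast_zmod_val]

lemma Smat_apply (r s : ZMod d) : Smat d r s = if r = s + 1 then 1 else 0 := rfl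

lemma Smat_pow_apply (n : ℕ) (r s : ZMod d) :
    (Smat d ^ n) r s = if r = s + n then 1 else 0 := by
  induction n generalizing r with
  | zero => simp [Matrix.one_apply]
  | succ n ih =>
    rw [pow_succ', Matrix.mul_apply, Finset.sum_eq_single (r - 1)]
    · simp only [Smat_apply, sub_add_cancel, if_true, one_mul, ih, Nat.cast_succ,
        sub_eq_iff_eq_add, add_assoc]
    · intro t _ ht
      rw [Smat_apply, if_neg (fun h => ht (by rw [h]; ring)), zero_mul]
    · simp

lemma Omat_pow (n : ℕ) :
    Omat d ^ n = Matrix.diagonal fun r => ZMod.stdAddChar (r * (n : ZMod d)) := by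
  have hOmat : Omat d = Matrix.diagonal fun r => ZMod.stdAddChar r := by
    ext r s
    simp [Omat, Matrix.diagonal_apply, omegaRoot_pow_val]
  rw [hOmat, Matrix.diagonal_pow]
  congr with r
  rw [Pi.pow_apply, ← AddChar.map_nsmul_eq_pow, nsmul_eq_mul, mul_comm]

noncomputable def displacement (d : ℕ) [NeZero d] (j k : ZMod d) : Matrix (ZMod d) (ZMod d) ℂ :=
  Smat d ^ j.val * Omat d ^ k.val

@[simp]
lemma displacement_zero_zero : displacement d 0 0 = 1 := by
  simp [displacement]

lemma displacement_apply (j k r s : ZMod d) :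
    displacement d j k r s = if r = s + j then ZMod.stdAddChar (s * k) else 0 := by
  rw [displacement, Omat_pow, Matrix.mul_diagonal, Smat_pow_apply, ZMod.natCast_zmod_val,
    ZMod.natCast_zmod_val, ite_mul, one_mul, zero_mul]

lemma conjTranspose_displacement_neg (j k : ZMod d) :
    (displacement d (-j) (-k))ᴴ = ZMod.stdAddChar (j * k) • displacement d j k := by
  ext r s
  simp only [Matrix.conjTranspose_apply, Matrix.smul_apply, displacement_apply, smul_eq_mul]
  by_cases h : r = s + j
  · rw [if_pos (by rw [h]; ring), if_pos h, star_def, ← AddChar.map_neg_eq_conj,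
      ← AddChar.map_add_eq_mul, h]
    ring_nf
  · rw [if_neg (fun h' => h (by rw [h']; ring)), if_neg h, star_zero, mul_zero]

lemma trace_displacement_mul_conjTranspose (a b j k : ZMod d) :
    (displacement d a b * (displacement d j k)ᴴ).trace
      = if a = j ∧ b = k then (d : ℂ) else 0 := by
  have hdiag : ∀ s, ∑ r, displacement d a b r s * star (displacement d j k r s)
      = if a = j then ZMod.stdAddChar (s * (b - k)) else 0 := by
    intro s
    simp only [displacement_apply, ite_mul, zero_mul, Finset.sum_ite_eq', Finset.mem_univ,
      if_true, add_right_inj]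
    split_ifs
    · rw [star_def, ← AddChar.map_neg_eq_conj, ← AddChar.map_add_eq_mul]
      ring_nf
    · rw [star_zero, mul_zero]
  simp only [Matrix.trace, Matrix.diag_apply, Matrix.mul_apply, Matrix.conjTranspose_apply]
  rw [Finset.sum_comm]
  simp only [hdiag]
  by_cases haj : a = j
  · rw [Finset.sum_ite_irrel]
    simp [haj, AddChar.sum_mulShift _ (ZMod.isPrimitive_stdAddChar d), sub_eq_zero]
  · simp [haj]

lemma omegaRoot_zpow_neg_val_mul (j k : ZMod d) :
    omegaRoot d ^ (-((j.val : ℤ) * (k.val : ℤ))) = ZMod.stdAddChar (-(j * k)) := by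
  rw [omegaRoot_zpow]
  push_cast
  rw [ZMod.natCast_zmod_val, ZMod.natCast_zmod_val]

lemma Trec_eq (c : Matrix (ZMod d) (ZMod d) ℂ) :
    Trec d c = (1 / (d : ℂ)) • ∑ j, ∑ k, c j k • (displacement d j k)ᴴ := rfl

lemma conjTranspose_Trec (c : Matrix (ZMod d) (ZMod d) ℂ) :
    (Trec d c)ᴴ = (1 / (d : ℂ)) • ∑ j, ∑ k, star (c j k) • displacement d j k := by
  simp [Trec_eq, Matrix.conjTranspose_sum]

lemma trace_displacement_mul_Trec (c : Matrix (ZMod d) (ZMod d) ℂ) (a b : ZMod d) :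
    (displacement d a b * Trec d c).trace = c a b := by
  have hd : (d : ℂ) ≠ 0 := NeZero.ne _
  simp only [Trec_eq, Matrix.mul_smul, Matrix.mul_sum, Matrix.trace_smul, Matrix.trace_sum,
    trace_displacement_mul_conjTranspose, smul_eq_mul, ite_and, mul_ite, mul_zero,
    Finset.sum_ite_irrel, Finset.sum_const_zero, Finset.sum_ite_eq, Finset.mem_univ, if_true]
  field_simp

lemma trace_displacement_mul_vecMulVec (v : ZMod d → ℂ) (j k : ZMod d) :
    (displacement d j k * Matrix.vecMulVec v (star v)).trace = overlap d v j k := by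
  rw [Matrix.mul_vecMulVec, Matrix.trace_vecMulVec]
  rfl

lemma overlap_eq_of_Trec_eq {c : Matrix (ZMod d) (ZMod d) ℂ} {v : ZMod d → ℂ}
    (h : Trec d c = Matrix.vecMulVec v (star v)) (j k : ZMod d) : overlap d v j k = c j k := by
  rw [← trace_displacement_mul_vecMulVec, ← h, trace_displacement_mul_Trec]

lemma star_trace_displacement_neg_mul {P : Matrix (ZMod d) (ZMod d) ℂ} (hP : P.IsHermitian)
    (j k : ZMod d) :
    star (displacement d (-j) (-k) * P).trace
      = ZMod.stdAddChar (j * k) * (displacement d j k * P).trace := by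
  rw [← Matrix.trace_conjTranspose, Matrix.conjTranspose_mul, hP.eq,
    conjTranspose_displacement_neg, Matrix.mul_smul, Matrix.trace_smul, smul_eq_mul,
    Matrix.trace_mul_comm]

lemma isHermitian_Trec {c : Matrix (ZMod d) (ZMod d) ℂ}
    (hc : ∀ j k, c j k = ZMod.stdAddChar (-(j * k)) * star (c (-j) (-k))) :
    (Trec d c).IsHermitian := by
  have hterm : ∀ j k, star (c j k) • displacement d j k
      = c (-j) (-k) • (displacement d (-j) (-k))ᴴ := by
    intro j k
    rw [conjTranspose_displacement_neg, smul_smul, hc, star_mul', star_star, star_def,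
      ← AddChar.map_neg_eq_conj, neg_neg, mul_comm]
  rw [Matrix.IsHermitian, conjTranspose_Trec, Trec_eq]
  congr 1
  exact Fintype.sum_equiv (Equiv.neg _) _ _ fun j =>
    Fintype.sum_equiv (Equiv.neg _) _ _ fun k => hterm j k

lemma trace_conjTranspose_Trec_mul_Trec (c : Matrix (ZMod d) (ZMod d) ℂ) :
    ((Trec d c)ᴴ * Trec d c).trace = ((∑ j, ∑ k, ‖c j k‖ ^ 2 : ℝ) : ℂ) / d := by
  simp only [conjTranspose_Trec, Matrix.smul_mul, Matrix.sum_mul, Matrix.trace_smul,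
    Matrix.trace_sum, trace_displacement_mul_Trec, smul_eq_mul, star_def, Complex.conj_mul']
  push_cast
  ring

lemma sum_sq_norm_eq {c : Matrix (ZMod d) (ZMod d) ℂ} (h0 : c 0 0 = 1)
    (hoff : ∀ j k : ZMod d, (j, k) ≠ (0, 0) → ‖c j k‖ ^ 2 = 1 / (d + 1)) :
    ∑ j, ∑ k, ‖c j k‖ ^ 2 = (d : ℝ) := by
  have hexcess : ∑ p : ZMod d × ZMod d, (‖c p.1 p.2‖ ^ 2 - 1 / ((d : ℝ) + 1))
      = 1 - 1 / ((d : ℝ) + 1) := by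
    rw [Fintype.sum_eq_single (0, 0) fun p hp => by rw [hoff p.1 p.2 hp, sub_self], h0, norm_one,
      one_pow]
  rw [Finset.sum_sub_distrib, Finset.sum_const, Finset.card_univ, Fintype.card_prod, ZMod.card,
    Fintype.sum_prod_type, sub_eq_iff_eq_add] at hexcess
  rw [hexcess, nsmul_eq_mul]
  have hd : (d : ℝ) + 1 ≠ 0 := by positivity
  push_cast
  field_simp
  ring

end WeylHeisenberg

section VecMulVec

variable {R ι : Type*}

lemma isHermitian_vecMulVec_star [Mul R] [StarMul R] (v : ι → R) :
    (Matrix.vecMulVec v (star v)).IsHermitian := by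
  simp [Matrix.IsHermitian]

lemma isIdempotentElem_vecMulVec_star [CommSemiring R] [StarRing R] [Fintype ι] {v : ι → R}
    (hv : v ⬝ᵥ star v = 1) :
    IsIdempotentElem (Matrix.vecMulVec v (star v)) := by
  rw [IsIdempotentElem, Matrix.vecMulVec_mul_vecMulVec, dotProduct_comm, hv, one_smul]

lemma dotProduct_star_self_eq_sum_sq_norm [Fintype ι] (v : ι → ℂ) :
    v ⬝ᵥ star v = ((∑ i, ‖v i‖ ^ 2 : ℝ) : ℂ) := by
  simp [dotProduct, Complex.mul_conj']

end VecMulVec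

section RankOne

variable {𝕜 ι : Type*} [RCLike 𝕜] [Fintype ι] [DecidableEq ι]

lemma exists_eq_single_of_sum_pow_eq_one {f : ι → ℝ} (h1 : ∑ i, f i = 1)
    (h2 : ∑ i, f i ^ 2 = 1) (h4 : ∑ i, f i ^ 4 = 1) : ∃ i, f = Pi.single i 1 := by
  have hle : ∀ i, f i ^ 2 ≤ 1 := fun i =>
    h2 ▸ Finset.single_le_sum (fun j _ => sq_nonneg (f j)) (Finset.mem_univ i)
  -- `∑ f² (1 - f²) = 0` with nonnegative terms, so every `f i ^ 2` is `0` or `1`.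
  have hdich : ∀ i, f i ^ 2 * (1 - f i ^ 2) = 0 := by
    have hsum : ∑ i, f i ^ 2 * (1 - f i ^ 2) = 0 := by
      simp only [mul_sub, mul_one, ← pow_add, Finset.sum_sub_distrib, h2, h4, sub_self]
    intro i
    exact (Finset.sum_eq_zero_iff_of_nonneg fun j _ =>
      mul_nonneg (sq_nonneg _) (sub_nonneg.mpr (hle j))).mp hsum i (Finset.mem_univ i)
  obtain ⟨i, hi⟩ : ∃ i, f i ≠ 0 := by
    by_contra! h
    simp [h] at h1
  have hi2 : f i ^ 2 = 1 := by
    linarith [(mul_eq_zero.mp (hdich i)).resolve_left (pow_ne_zero 2 hi)]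
  have hzero : ∀ j ≠ i, f j = 0 := by
    rw [← Finset.add_sum_erase _ _ (Finset.mem_univ i), hi2, add_eq_left,
      Finset.sum_eq_zero_iff_of_nonneg fun j _ => sq_nonneg (f j)] at h2
    exact fun j hj =>
      pow_eq_zero_iff two_ne_zero |>.mp (h2 j (Finset.mem_erase.mpr ⟨hj, Finset.mem_univ j⟩))
  rw [Fintype.sum_eq_single i hzero] at h1
  exact ⟨i, funext fun j => by
    by_cases hj : j = i
    · subst hj; simp [h1]
    · simp [hj, hzero j hj]⟩

lemma Matrix.IsHermitian.trace_pow {A : Matrix ι ι 𝕜} (hA : A.IsHermitian) (n : ℕ) :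
    (A ^ n).trace = ∑ i, (hA.eigenvalues i : 𝕜) ^ n := by
  conv_lhs => rw [hA.spectral_theorem]
  rw [← map_pow, Unitary.conjStarAlgAut_apply, Matrix.trace_mul_cycle,
    Unitary.coe_star_mul_self, one_mul, Matrix.diagonal_pow, Matrix.trace_diagonal]
  rfl

lemma Matrix.IsHermitian.exists_eq_vecMulVec_star {A : Matrix ι ι 𝕜} (hA : A.IsHermitian)
    (h1 : A.trace = 1) (h2 : (A ^ 2).trace = 1) (h4 : (A ^ 4).trace = 1) :
    ∃ v : ι → 𝕜, A = Matrix.vecMulVec v (star v) := by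
  have hsum : ∀ n, (A ^ n).trace = 1 → ∑ i, hA.eigenvalues i ^ n = 1 := fun n h => by
    rw [hA.trace_pow] at h
    exact_mod_cast h
  obtain ⟨i, hi⟩ := exists_eq_single_of_sum_pow_eq_one
    (by simpa using hsum 1 (by rwa [pow_one])) (hsum 2 h2) (hsum 4 h4)
  refine ⟨(hA.eigenvectorUnitary : Matrix ι ι 𝕜) *ᵥ Pi.single i 1, ?_⟩
  have hdiag : (RCLike.ofReal ∘ hA.eigenvalues : ι → 𝕜) = Pi.single i 1 := by
    rw [hi]; ext j; by_cases hj : j = i <;> simp [hj]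
  conv_lhs => rw [hA.spectral_theorem, hdiag, Unitary.conjStarAlgAut_apply, Matrix.diagonal_single,
    Matrix.single_eq_single_vecMulVec_single, Matrix.mul_vecMulVec, Matrix.vecMulVec_mul]
  rw [Matrix.star_mulVec, Matrix.star_eq_conjTranspose, ← Pi.single_star, star_one]

end RankOne

theorem stmt1_general (d : ℕ) [NeZero d] (c : Matrix (ZMod d) (ZMod d) ℂ) :
    (∃ v : ZMod d → ℂ,
      (∑ r : ZMod d, ‖v r‖ ^ 2) = 1 ∧
      Trec d c = Matrix.vecMulVec v (star v) ∧
      (∀ j k : ZMod d, (j, k) ≠ (0, 0) →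
        ‖overlap d v j k‖ ^ 2 = 1 / (d + 1))) ↔
    ((∀ j k : ZMod d,
        c j k = omegaRoot d ^ (-((j.val : ℤ) * (k.val : ℤ))) * (starRingEnd ℂ) (c (-j) (-k))) ∧
      c 0 0 = 1 ∧
      (∀ j k : ZMod d, (j, k) ≠ (0, 0) → ‖c j k‖ ^ 2 = 1 / (d + 1)) ∧
      ((Trec d c) ^ 4).trace = 1) := by
  simp only [omegaRoot_zpow_neg_val_mul, starRingEnd_apply]
  constructor
  · rintro ⟨v, hv, hcv, hsic⟩
    have hnorm : v ⬝ᵥ star v = 1 := by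
      rw [dotProduct_star_self_eq_sum_sq_norm, hv, Complex.ofReal_one]
    have hcoef (j k : ZMod d) : c j k = (displacement d j k * Trec d c).trace :=
      (trace_displacement_mul_Trec c j k).symm
    refine ⟨fun j k => ?_, ?_, fun j k hjk => overlap_eq_of_Trec_eq hcv j k ▸ hsic j k hjk, ?_⟩
    · rw [hcoef (-j) (-k), hcv, star_trace_displacement_neg_mul (isHermitian_vecMulVec_star v),
        ← hcv, ← hcoef, ← mul_assoc, ← AddChar.map_add_eq_mul, neg_add_cancel,
        AddChar.map_zero_eq_one, one_mul]
    · rw [hcoef 0 0, displacement_zero_zero, one_mul, hcv, Matrix.trace_vecMulVec, hnorm]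
    · rw [hcv, (isIdempotentElem_vecMulVec_star hnorm).pow_eq four_ne_zero,
        Matrix.trace_vecMulVec, hnorm]
  · rintro ⟨hsymm, h0, hoff, h4⟩
    have hH := isHermitian_Trec hsymm
    have h1 : (Trec d c).trace = 1 := by
      rw [← h0, ← trace_displacement_mul_Trec c 0 0, displacement_zero_zero, one_mul]
    have h2 : (Trec d c ^ 2).trace = 1 := by
      nth_rw 1 [sq, ← hH.eq]
      rw [trace_conjTranspose_Trec_mul_Trec, sum_sq_norm_eq h0 hoff,
        Complex.ofReal_natCast, div_self (NeZero.ne _)]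
    obtain ⟨v, hv⟩ := hH.exists_eq_vecMulVec_star h1 h2 h4
    refine ⟨v, ?_, hv, fun j k hjk => overlap_eq_of_Trec_eq hv j k ▸ hoff j k hjk⟩
    rw [← Complex.ofReal_inj, ← dotProduct_star_self_eq_sum_sq_norm, ← Matrix.trace_vecMulVec,
      ← hv, h1, Complex.ofReal_one]

theorem stmt1 (d : ℕ) [NeZero d] (hd : 2 ≤ d) (c : Matrix (ZMod d) (ZMod d) ℂ) :
    (∃ v : ZMod d → ℂ,
      (∑ r : ZMod d, ‖v r‖ ^ 2) = 1 ∧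
      Trec d c = Matrix.vecMulVec v (star v) ∧
      (∀ j k : ZMod d, (j, k) ≠ (0, 0) →
        ‖overlap d v j k‖ ^ 2 = 1 / (d + 1))) ↔
    ((∀ j k : ZMod d,
        c j k = omegaRoot d ^ (-((j.val : ℤ) * (k.val : ℤ))) * (starRingEnd ℂ) (c (-j) (-k))) ∧
      c 0 0 = 1 ∧
      (∀ j k : ZMod d, (j, k) ≠ (0, 0) → ‖c j k‖ ^ 2 = 1 / (d + 1)) ∧
      ((Trec d c) ^ 4).trace = 1) :=
  stmt1_general d c
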